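/- For a nonzero M ∈ sl₃(ℂ), the centralizer of M in sl₃(ℂ) is 4-dimensional if and only if there exists λ ∈ ℂ such that M − λ·Id has rank 1. Equivalently, this holds if and only if M is similar to diag(1,1,−2) up to scalar, or M is similar to the elementary nilpotent matrix E₁₂. -/

import Mathlib

open Matrix

/-- The centralizer of `M` in `sl₃(ℂ)`. -/
noncomputable def sl3Centralizer (M : Matrix (Fin 3) (Fin 3) ℂ) :
    Submodule ℂ (Matrix (Fin 3) (Fin 3) ℂ) where
  carrier := {A | Matrix.trace A = 0 ∧ A * M = M * A}
  add_mem' := by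
    rintro a b ⟨ha1, ha2⟩ ⟨hb1, hb2⟩
    exact ⟨by simp [Matrix.trace_add, ha1, hb1],
      by rw [Matrix.add_mul, Matrix.mul_add, ha2, hb2]⟩
  zero_mem' := ⟨by simp, by simp⟩
  smul_mem' := by
    rintro c a ⟨ha1, ha2⟩
    exact ⟨by simp [ha1], by rw [Matrix.smul_mul, Matrix.mul_smul, ha2]⟩


open Polynomial

abbrev Mat3 := Matrix (Fin 3) (Fin 3) ℂ

lemma eval_charpoly' (M : Mat3) (a : ℂ) :
    M.charpoly.eval a = (a • (1 : Mat3) - M).det := by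
  rw [Matrix.charpoly, eval_det, matPolyEquiv_charmatrix]
  congr 1
  simp [Polynomial.eval_sub, Matrix.scalar_apply]
  rw [Matrix.smul_one_eq_diagonal]

lemma mulVec_vecMulVec (v w x : Fin 3 → ℂ) :
    (vecMulVec v w).mulVec x = (w ⬝ᵥ x) • v := by
  funext i
  simp only [mulVec, vecMulVec_apply, dotProduct, Pi.smul_apply, smul_eq_mul,
    Fin.sum_univ_three]
  ring

lemma mat3_eq_zero_of_mulVec_eq_zero {N : Mat3} (h : ∀ x, N.mulVec x = 0) : N = 0 := by
  ext i j
  have := congrFun (h (Pi.single j 1)) i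
  simpa [Matrix.mulVec_single] using this

lemma rank_vecMulVec_eq_one {v w : Fin 3 → ℂ} (hv : v ≠ 0) (hw : w ≠ 0) :
    (vecMulVec v w).rank = 1 := by
  have hrange : LinearMap.range (vecMulVec v w).mulVecLin = Submodule.span ℂ {v} := by
    apply le_antisymm
    · rintro _ ⟨x, rfl⟩
      rw [Matrix.mulVecLin_apply, mulVec_vecMulVec]
      exact Submodule.smul_mem _ _ (Submodule.mem_span_singleton_self v)
    · rw [Submodule.span_le, Set.singleton_subset_iff]
      obtain ⟨k, hk⟩ : ∃ k, w k ≠ 0 := by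
        by_contra h; push_neg at h; exact hw (funext h)
      refine ⟨(w k)⁻¹ • (Pi.single k (1:ℂ) : Fin 3 → ℂ), ?_⟩
      rw [Matrix.mulVecLin_apply, Matrix.mulVec_smul, mulVec_vecMulVec, dotProduct_single]
      rw [smul_smul]
      field_simp
      rw [one_smul]
  have : (vecMulVec v w).rank = Module.finrank ℂ (LinearMap.range (vecMulVec v w).mulVecLin) := rfl
  rw [this, hrange]
  exact finrank_span_singleton hv

lemma exists_vecMulVec_of_rank_one {N : Mat3} (h : N.rank = 1) :
    ∃ v w : Fin 3 → ℂ, v ≠ 0 ∧ w ≠ 0 ∧ N = vecMulVec v w := by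
  have hr : Module.finrank ℂ (LinearMap.range N.mulVecLin) = 1 := h
  obtain ⟨v0, hv0ne, hv0span⟩ := finrank_eq_one_iff'.mp hr
  have hvne : (v0 : Fin 3 → ℂ) ≠ 0 := fun hh => hv0ne (Subtype.ext hh)
  choose w hw using fun j =>
    hv0span ⟨N.mulVec (Pi.single j 1), LinearMap.mem_range_self _ _⟩
  have hw' : ∀ j, w j • (v0 : Fin 3 → ℂ) = N.mulVec (Pi.single j 1) := by
    intro j
    exact congrArg Subtype.val (hw j)
  have hN : N = vecMulVec (v0 : Fin 3 → ℂ) w := by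
    ext i j
    have := congrFun (hw' j) i
    simp only [Pi.smul_apply, smul_eq_mul, Matrix.mulVec_single, mul_one, MulOpposite.op_one, one_smul, Matrix.col_apply] at this
    rw [vecMulVec_apply, mul_comm]
    exact this.symm
  refine ⟨v0, w, hvne, ?_, hN⟩
  intro hw0
  rw [hw0] at hN
  have : N = 0 := by
    rw [hN]; ext i j; simp [vecMulVec_apply]
  rw [this] at h
  simp [Matrix.rank_zero] at h

lemma mem_sl3Centralizer {M A : Mat3} :
    A ∈ sl3Centralizer M ↔ Matrix.trace A = 0 ∧ A * M = M * A := Iff.rfl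

lemma sl3Centralizer_smul (M : Mat3) {c : ℂ} (hc : c ≠ 0) :
    sl3Centralizer (c • M) = sl3Centralizer M := by
  ext A
  rw [mem_sl3Centralizer, mem_sl3Centralizer]
  constructor <;> rintro ⟨h1, h2⟩ <;> refine ⟨h1, ?_⟩
  · rw [mul_smul_comm, smul_mul_assoc] at h2
    exact smul_right_injective _ hc h2
  · rw [mul_smul_comm, smul_mul_assoc, h2]

/-- conjugation linear equivalence between centralizers -/
noncomputable def conjCentralizerMap (M : Mat3) (P : (Mat3)ˣ) :
    sl3Centralizer M →ₗ[ℂ] sl3Centralizer ((P : Mat3) * M * (↑P⁻¹ : Mat3)) where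
  toFun A := ⟨(P : Mat3) * A.1 * (↑P⁻¹ : Mat3), by
    obtain ⟨h1, h2⟩ := A.2
    have hPi : (↑P⁻¹ : Mat3) * (P : Mat3) = 1 := by
      rw [← Units.val_mul, inv_mul_cancel, Units.val_one]
    refine ⟨by rw [Matrix.trace_units_conj]; exact h1, ?_⟩
    calc ((P : Mat3) * A.1 * ↑P⁻¹) * ((P : Mat3) * M * ↑P⁻¹)
        = (P : Mat3) * (A.1 * ((↑P⁻¹ * (P : Mat3)) * M)) * ↑P⁻¹ := by
          simp only [Matrix.mul_assoc]
      _ = (P : Mat3) * (A.1 * M) * ↑P⁻¹ := by rw [hPi, Matrix.one_mul]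
      _ = (P : Mat3) * (M * A.1) * ↑P⁻¹ := by rw [h2]
      _ = (P : Mat3) * (M * ((↑P⁻¹ * (P : Mat3)) * A.1)) * ↑P⁻¹ := by
          rw [hPi, Matrix.one_mul]
      _ = ((P : Mat3) * M * ↑P⁻¹) * ((P : Mat3) * A.1 * ↑P⁻¹) := by
          simp only [Matrix.mul_assoc]⟩
  map_add' A B := by
    apply Subtype.ext
    simp [Matrix.mul_add, Matrix.add_mul]
  map_smul' c A := by
    apply Subtype.ext
    simp [Matrix.mul_smul, Matrix.smul_mul]

lemma finrank_sl3Centralizer_conj (M : Mat3) (P : (Mat3)ˣ) :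
    Module.finrank ℂ (sl3Centralizer ((P : Mat3) * M * (↑P⁻¹ : Mat3))) =
      Module.finrank ℂ (sl3Centralizer M) := by
  have hPi : (↑P⁻¹ : Mat3) * (P : Mat3) = 1 := by
    rw [← Units.val_mul, inv_mul_cancel, Units.val_one]
  have hPp : (P : Mat3) * (↑P⁻¹ : Mat3) = 1 := by
    rw [← Units.val_mul, mul_inv_cancel, Units.val_one]
  refine (LinearEquiv.finrank_eq (LinearEquiv.ofLinear (conjCentralizerMap M P)
    (?_ ∘ₗ conjCentralizerMap ((P : Mat3) * M * (↑P⁻¹ : Mat3)) P⁻¹) ?_ ?_)).symm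
  · -- coercion fix: centralizer of P⁻¹ * (P M P⁻¹) * P⁻¹⁻¹  equals centralizer of M
    have : (↑P⁻¹ : Mat3) * ((P : Mat3) * M * (↑P⁻¹ : Mat3)) * (↑P⁻¹⁻¹ : Mat3) = M := by
      rw [inv_inv]
      calc (↑P⁻¹ : Mat3) * ((P : Mat3) * M * (↑P⁻¹ : Mat3)) * (P : Mat3)
          = (↑P⁻¹ * (P : Mat3)) * M * ((↑P⁻¹ : Mat3) * (P : Mat3)) := by
            simp only [Matrix.mul_assoc]
        _ = M := by rw [hPi, Matrix.one_mul, Matrix.mul_one]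
    exact (LinearEquiv.ofEq _ _ (by rw [this])).toLinearMap
  · apply LinearMap.ext
    rintro ⟨A, hA⟩
    apply Subtype.ext
    show (P : Mat3) * ((↑P⁻¹ : Mat3) * A * (↑P⁻¹⁻¹ : Mat3)) * (↑P⁻¹ : Mat3) = A
    rw [inv_inv]
    calc (P : Mat3) * ((↑P⁻¹ : Mat3) * A * (P : Mat3)) * (↑P⁻¹ : Mat3)
        = ((P : Mat3) * ↑P⁻¹) * A * ((P : Mat3) * ↑P⁻¹) := by simp only [Matrix.mul_assoc]
      _ = A := by rw [hPp, Matrix.one_mul, Matrix.mul_one]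
  · apply LinearMap.ext
    rintro ⟨A, hA⟩
    apply Subtype.ext
    show (↑P⁻¹ : Mat3) * ((P : Mat3) * A * (↑P⁻¹ : Mat3)) * (↑P⁻¹⁻¹ : Mat3) = A
    rw [inv_inv]
    calc (↑P⁻¹ : Mat3) * ((P : Mat3) * A * (↑P⁻¹ : Mat3)) * (P : Mat3)
        = ((↑P⁻¹ : Mat3) * ↑P) * A * ((↑P⁻¹ : Mat3) * ↑P) := by simp only [Matrix.mul_assoc]
      _ = A := by rw [hPi, Matrix.one_mul, Matrix.mul_one]

noncomputable def diagToFun : sl3Centralizer (diagonal ![1, 1, -2]) →ₗ[ℂ] (Fin 4 → ℂ) where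
  toFun A := ![A.1 0 0, A.1 0 1, A.1 1 0, A.1 1 1]
  map_add' A B := by funext k; fin_cases k <;> simp
  map_smul' c A := by funext k; fin_cases k <;> simp

noncomputable def diagInvFun : (Fin 4 → ℂ) →ₗ[ℂ] sl3Centralizer (diagonal ![1, 1, -2]) where
  toFun x := ⟨!![x 0, x 1, 0; x 2, x 3, 0; 0, 0, -x 0 - x 3], by
    rw [mem_sl3Centralizer]
    constructor
    · rw [Matrix.trace_fin_three]; simp
    · ext i j
      rw [Matrix.mul_diagonal, Matrix.diagonal_mul]
      fin_cases i <;> fin_cases j <;> simp <;> ring⟩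
  map_add' x y := by
    apply Subtype.ext
    show !![_,_,_;_,_,_;_,_,_] = (!![_,_,_;_,_,_;_,_,_] + !![_,_,_;_,_,_;_,_,_] : Mat3)
    ext i j
    fin_cases i <;> fin_cases j <;> simp <;> ring
  map_smul' c x := by
    apply Subtype.ext
    show !![_,_,_;_,_,_;_,_,_] = (c • !![_,_,_;_,_,_;_,_,_] : Mat3)
    ext i j
    fin_cases i <;> fin_cases j <;> simp <;> ring

lemma finrank_centralizer_diag :
    Module.finrank ℂ (sl3Centralizer (diagonal ![1, 1, -2])) = 4 := by
  have e : sl3Centralizer (diagonal ![1, 1, -2]) ≃ₗ[ℂ] (Fin 4 → ℂ) := by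
    refine LinearEquiv.ofLinear diagToFun diagInvFun ?_ ?_
    · apply LinearMap.ext
      intro x
      funext k
      fin_cases k <;> simp [diagToFun, diagInvFun]
    · apply LinearMap.ext
      rintro ⟨A, hA⟩
      obtain ⟨h1, h2⟩ := mem_sl3Centralizer.mp hA
      apply Subtype.ext
      have key : ∀ i j : Fin 3, A i j * (![1,1,-2] j) = (![1,1,-2] i) * A i j := by
        intro i j
        have := congrFun (congrFun h2 i) j
        rwa [Matrix.mul_diagonal, Matrix.diagonal_mul] at this
      have h02 : A 0 2 = 0 := by
        have := key 0 2; simp at this; linear_combination (this) / (-3)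
      have h12 : A 1 2 = 0 := by
        have := key 1 2; simp at this; linear_combination (this) / (-3)
      have h20 : A 2 0 = 0 := by
        have := key 2 0; simp at this; linear_combination (this) / 3
      have h21 : A 2 1 = 0 := by
        have := key 2 1; simp at this; linear_combination (this) / 3
      have htr : A 2 2 = -A 0 0 - A 1 1 := by
        rw [Matrix.trace_fin_three] at h1; linear_combination h1
      show (!![_,_,_;_,_,_;_,_,_] : Mat3) = A
      ext i j
      fin_cases i <;> fin_cases j <;>
        simp [diagToFun, h02, h12, h20, h21, htr]
  rw [e.finrank_eq]
  simp [Module.finrank_fin_fun]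

noncomputable def nilToFun : sl3Centralizer (single 0 1 1) →ₗ[ℂ] (Fin 4 → ℂ) where
  toFun A := ![A.1 0 0, A.1 0 1, A.1 0 2, A.1 2 1]
  map_add' A B := by funext k; fin_cases k <;> simp
  map_smul' c A := by funext k; fin_cases k <;> simp

noncomputable def nilInvFun : (Fin 4 → ℂ) →ₗ[ℂ] sl3Centralizer (single 0 1 1) where
  toFun x := ⟨!![x 0, x 1, x 2; 0, x 0, 0; 0, x 3, -2 * x 0], by
    rw [mem_sl3Centralizer]
    constructor
    · rw [Matrix.trace_fin_three]; simp; ring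
    · ext i j
      fin_cases i <;> fin_cases j <;>
        simp [Matrix.mul_apply, Matrix.single, Fin.sum_univ_three]⟩
  map_add' x y := by
    apply Subtype.ext
    show !![_,_,_;_,_,_;_,_,_] = (!![_,_,_;_,_,_;_,_,_] + !![_,_,_;_,_,_;_,_,_] : Mat3)
    ext i j
    fin_cases i <;> fin_cases j <;> simp [Matrix.vecHead, Matrix.vecTail] <;> ring
  map_smul' c x := by
    apply Subtype.ext
    show !![_,_,_;_,_,_;_,_,_] = (c • !![_,_,_;_,_,_;_,_,_] : Mat3)
    ext i j
    fin_cases i <;> fin_cases j <;> simp [Matrix.vecHead, Matrix.vecTail] <;> ring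

lemma finrank_centralizer_nil :
    Module.finrank ℂ (sl3Centralizer (single 0 1 1)) = 4 := by
  have e : sl3Centralizer (single 0 1 1) ≃ₗ[ℂ] (Fin 4 → ℂ) := by
    refine LinearEquiv.ofLinear nilToFun nilInvFun ?_ ?_
    · apply LinearMap.ext
      intro x
      funext k
      fin_cases k <;> simp [nilToFun, nilInvFun]
    · apply LinearMap.ext
      rintro ⟨A, hA⟩
      obtain ⟨h1, h2⟩ := mem_sl3Centralizer.mp hA
      apply Subtype.ext
      have key : ∀ i j : Fin 3,
          (A * (single 0 1 1 : Mat3)) i j = ((single 0 1 1 : Mat3) * A) i j := by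
        intro i j; exact congrFun (congrFun h2 i) j
      have h00 : A 1 0 = 0 := by
        have := key 0 0
        simpa [Matrix.mul_apply, Matrix.single, Fin.sum_univ_three] using this.symm
      have h01 : A 1 1 = A 0 0 := by
        have := key 0 1
        simpa [Matrix.mul_apply, Matrix.single, Fin.sum_univ_three] using this.symm
      have h02 : A 1 2 = 0 := by
        have := key 0 2
        simpa [Matrix.mul_apply, Matrix.single, Fin.sum_univ_three] using this.symm
      have h21 : A 2 0 = 0 := by
        have := key 2 1
        simpa [Matrix.mul_apply, Matrix.single, Fin.sum_univ_three] using this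
      have htr : A 2 2 = -2 * A 0 0 := by
        rw [Matrix.trace_fin_three] at h1; linear_combination h1 - h01
      show (!![_,_,_;_,_,_;_,_,_] : Mat3) = A
      ext i j
      fin_cases i <;> fin_cases j <;>
        simp [nilToFun, Matrix.vecHead, Matrix.vecTail, h00, h01, h02, h21, htr]
  rw [e.finrank_eq]
  simp [Module.finrank_fin_fun]

lemma conj_of_mul_eq (Q : (Mat3)ˣ) {M E : Mat3} (h : M * (Q : Mat3) = (Q : Mat3) * E) :
    M = (Q : Mat3) * E * (↑Q⁻¹ : Mat3) := by
  have hQ : (Q : Mat3) * (↑Q⁻¹ : Mat3) = 1 := by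
    rw [← Units.val_mul, mul_inv_cancel, Units.val_one]
  calc M = M * ((Q : Mat3) * ↑Q⁻¹) := by rw [hQ, Matrix.mul_one]
    _ = (M * (Q : Mat3)) * ↑Q⁻¹ := by rw [Matrix.mul_assoc]
    _ = (Q : Mat3) * E * ↑Q⁻¹ := by rw [h]

/-- The dot-product functional. -/
noncomputable def dotFun (w : Fin 3 → ℂ) : (Fin 3 → ℂ) →ₗ[ℂ] ℂ where
  toFun x := w ⬝ᵥ x
  map_add' x y := dotProduct_add w x y
  map_smul' c x := by simp [dotProduct_smul]

lemma dotFun_apply (w x : Fin 3 → ℂ) : dotFun w x = w ⬝ᵥ x := rfl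

lemma finrank_ker_dotFun {w : Fin 3 → ℂ} (hw : w ≠ 0) :
    Module.finrank ℂ (LinearMap.ker (dotFun w)) = 2 := by
  obtain ⟨k, hk⟩ : ∃ k, w k ≠ 0 := by
    by_contra h; push_neg at h; exact hw (funext h)
  have hrk : Module.finrank ℂ (LinearMap.range (dotFun w)) +
      Module.finrank ℂ (LinearMap.ker (dotFun w)) = 3 := by
    have := LinearMap.finrank_range_add_finrank_ker (dotFun w)
    rwa [Module.finrank_fin_fun] at this
  have h1 : Module.finrank ℂ (LinearMap.range (dotFun w)) ≤ 1 := by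
    simpa using Submodule.finrank_le (LinearMap.range (dotFun w))
  have h0 : Module.finrank ℂ (LinearMap.range (dotFun w)) ≠ 0 := by
    intro h0
    have hbot : LinearMap.range (dotFun w) = ⊥ := Submodule.finrank_eq_zero.mp h0
    have hmem := LinearMap.mem_range_self (dotFun w) (Pi.single k 1)
    rw [hbot] at hmem
    have : dotFun w (Pi.single k 1) = 0 := by simpa using hmem
    rw [dotFun_apply, dotProduct_single, mul_one] at this
    exact hk this
  omega

/-- build a unit from a Fin-3 basis of ℂ³, whose columns are the basis vectors -/
noncomputable def basisUnit (b : Module.Basis (Fin 3) ℂ (Fin 3 → ℂ)) : (Mat3)ˣ :=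
  letI := Module.Basis.invertibleToMatrix (Pi.basisFun ℂ (Fin 3)) b
  unitOfInvertible ((Pi.basisFun ℂ (Fin 3)).toMatrix ⇑b)

lemma basisUnit_apply (b : Module.Basis (Fin 3) ℂ (Fin 3 → ℂ)) (i j : Fin 3) :
    (basisUnit b : Mat3) i j = b j i := by
  letI := Module.Basis.invertibleToMatrix (Pi.basisFun ℂ (Fin 3)) b
  show ((Pi.basisFun ℂ (Fin 3)).toMatrix ⇑b) i j = b j i
  rw [Module.Basis.toMatrix_apply, Pi.basisFun_repr]

lemma mul_basisUnit_apply (M : Mat3) (b : Module.Basis (Fin 3) ℂ (Fin 3 → ℂ)) (i j : Fin 3) :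
    (M * (basisUnit b : Mat3)) i j = M.mulVec (b j) i := by
  simp only [Matrix.mul_apply, Matrix.mulVec, dotProduct, basisUnit_apply]

lemma classification_of_rank_one (M : Mat3) (htr : Matrix.trace M = 0)
    (lam : ℂ)
    (hdec : ∃ v w : Fin 3 → ℂ, v ≠ 0 ∧ w ≠ 0 ∧ M - lam • (1 : Mat3) = vecMulVec v w) :
    (∃ c : ℂ, c ≠ 0 ∧ ∃ P : (Mat3)ˣ,
        M = c • ((P : Mat3) * Matrix.diagonal ![1, 1, -2] * (↑P⁻¹ : Mat3))) ∨
    (∃ P : (Mat3)ˣ,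
        M = (P : Mat3) * Matrix.single 0 1 1 * (↑P⁻¹ : Mat3)) := by
  obtain ⟨v, w, hv, hw, hN⟩ := hdec
  have hM : M = lam • (1 : Mat3) + vecMulVec v w := by rw [← hN]; abel
  have htrN : w ⬝ᵥ v = -3 * lam := by
    have h2 : Matrix.trace (M - lam • (1 : Mat3)) = -3 * lam := by
      rw [Matrix.trace_sub, htr, Matrix.trace_smul, Matrix.trace_one]
      simp; ring
    rw [hN, Matrix.trace_fin_three] at h2
    simp only [vecMulVec_apply] at h2
    rw [dotProduct, Fin.sum_univ_three]
    linear_combination h2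
  have hMx : ∀ x, M.mulVec x = lam • x + (w ⬝ᵥ x) • v := by
    intro x
    rw [hM, Matrix.add_mulVec, mulVec_vecMulVec, Matrix.smul_mulVec, Matrix.one_mulVec,
      add_comm]
  obtain ⟨k, hk⟩ : ∃ k, w k ≠ 0 := by
    by_contra h; push_neg at h; exact hw (funext h)
  have hker := finrank_ker_dotFun hw
  by_cases ht : w ⬝ᵥ v = 0
  · -- nilpotent case : lam = 0
    right
    have hlam : lam = 0 := by rw [ht] at htrN; linear_combination (1/3 : ℂ) * htrN
    set u : Fin 3 → ℂ := (w k)⁻¹ • (Pi.single k (1:ℂ) : Fin 3 → ℂ) with hu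
    have hwu : w ⬝ᵥ u = 1 := by
      rw [hu, dotProduct_smul, dotProduct_single, mul_one, smul_eq_mul,
        inv_mul_cancel₀ hk]
    obtain ⟨b2, hb2ker, hb2span⟩ :
        ∃ b2 ∈ LinearMap.ker (dotFun w), b2 ∉ Submodule.span ℂ {v} := by
      by_contra hcon
      push_neg at hcon
      have := Submodule.finrank_mono (hcon : LinearMap.ker (dotFun w) ≤ Submodule.span ℂ {v})
      rw [hker, finrank_span_singleton hv] at this
      omega
    have hwb2 : w ⬝ᵥ b2 = 0 := hb2ker
    have hind : LinearIndependent ℂ ![v, u, b2] := by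
      rw [Fintype.linearIndependent_iff]
      intro g hg
      rw [Fin.sum_univ_three] at hg
      simp only [Matrix.cons_val_zero, Matrix.cons_val_one, Matrix.head_cons,
        Matrix.cons_val_two, Matrix.tail_cons] at hg
      have hφ : dotFun w (g 0 • v + g 1 • u + g 2 • b2) = 0 := by
        rw [hg, map_zero]
      simp only [map_add, _root_.map_smul, dotFun_apply, dotProduct_smul, ht, hwu, hwb2,
        smul_eq_mul, mul_zero, mul_one, add_zero, zero_add] at hφ
      have hg1 : g 1 = 0 := hφ
      rw [hg1, zero_smul, add_zero] at hg
      have hg2 : g 2 = 0 := by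
        by_contra hg2
        apply hb2span
        rw [Submodule.mem_span_singleton]
        have h2 : g 2 • b2 = (-(g 0)) • v := by linear_combination (norm := module) hg
        have h3 : b2 = (g 2)⁻¹ • ((-(g 0)) • v) := by
          rw [← h2, smul_smul, inv_mul_cancel₀ hg2, one_smul]
        exact ⟨(g 2)⁻¹ * (-(g 0)), by rw [h3, smul_smul]⟩
      rw [hg2, zero_smul, add_zero] at hg
      have hg0 : g 0 = 0 := by
        rcases smul_eq_zero.mp hg with h | h
        · exact h
        · exact absurd h hv
      intro i; fin_cases i <;> assumption
    have hcard : Fintype.card (Fin 3) = Module.finrank ℂ (Fin 3 → ℂ) := by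
      simp [Module.finrank_fin_fun]
    let bb : Module.Basis (Fin 3) ℂ (Fin 3 → ℂ) := basisOfLinearIndependentOfCardEqFinrank hind hcard
    have hbb : ∀ j, bb j = ![v, u, b2] j := fun j => by
      rw [coe_basisOfLinearIndependentOfCardEqFinrank]
    refine ⟨basisUnit bb, conj_of_mul_eq _ ?_⟩
    ext i j
    rw [mul_basisUnit_apply]
    rw [Matrix.mul_apply, Fin.sum_univ_three]
    fin_cases j <;>
      simp only [Fin.zero_eta, Fin.mk_one, Fin.reduceFinMk, Fin.isValue]
    · -- M (b 0) = M v = 0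
      have : M.mulVec (bb 0) = 0 := by
        rw [hbb 0]
        show M.mulVec v = 0
        rw [hMx v, hlam, ht]
        simp
      rw [this]
      simp [Matrix.single]
    · -- M (b 1) = M u = v
      have : M.mulVec (bb 1) = v := by
        rw [hbb 1]
        show M.mulVec u = v
        rw [hMx u, hlam, hwu]
        simp
      rw [this]
      simp [Matrix.single, basisUnit_apply, hbb 0]
    · -- M (b 2) = 0
      have : M.mulVec (bb 2) = 0 := by
        rw [hbb 2]
        show M.mulVec b2 = 0
        rw [hMx b2, hlam, hwb2]
        simp
      rw [this]
      simp [Matrix.single]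
  · -- diagonalizable case : lam ≠ 0
    left
    have hlam : lam ≠ 0 := by
      intro h0
      apply ht
      rw [h0] at htrN; rw [htrN]; ring
    obtain ⟨ub⟩ : Nonempty (Module.Basis (Fin 2) ℂ (LinearMap.ker (dotFun w))) :=
      ⟨Module.finBasisOfFinrankEq ℂ _ hker⟩
    set u0 : Fin 3 → ℂ := (ub 0 : Fin 3 → ℂ) with hu0
    set u1 : Fin 3 → ℂ := (ub 1 : Fin 3 → ℂ) with hu1
    have hwu0 : w ⬝ᵥ u0 = 0 := (ub 0).2
    have hwu1 : w ⬝ᵥ u1 = 0 := (ub 1).2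
    have hind : LinearIndependent ℂ ![u0, u1, v] := by
      rw [Fintype.linearIndependent_iff]
      intro g hg
      rw [Fin.sum_univ_three] at hg
      simp only [Matrix.cons_val_zero, Matrix.cons_val_one, Matrix.head_cons,
        Matrix.cons_val_two, Matrix.tail_cons] at hg
      have hφ : dotFun w (g 0 • u0 + g 1 • u1 + g 2 • v) = 0 := by
        rw [hg, map_zero]
      simp only [map_add, _root_.map_smul, dotFun_apply, dotProduct_smul, hwu0, hwu1, htrN,
        smul_eq_mul, mul_zero, add_zero, zero_add] at hφ
      have hg2 : g 2 = 0 := by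
        rcases mul_eq_zero.mp hφ with h | h
        · exact h
        · exfalso; apply hlam; linear_combination -h / 3
      rw [hg2, zero_smul, add_zero] at hg
      -- now use independence inside the kernel
      have hker0 : g 0 • ub 0 + g 1 • ub 1 = (0 : LinearMap.ker (dotFun w)) := by
        apply Subtype.ext
        rw [Submodule.coe_add, SetLike.val_smul, SetLike.val_smul, Submodule.coe_zero]
        exact hg
      have hbind := Fintype.linearIndependent_iff.mp ub.linearIndependent ![g 0, g 1]
      rw [Fin.sum_univ_two] at hbind
      simp only [Matrix.cons_val_zero, Matrix.cons_val_one, Matrix.head_cons] at hbind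
      have := hbind hker0
      intro i; fin_cases i
      · exact this 0
      · exact this 1
      · exact hg2
    have hcard : Fintype.card (Fin 3) = Module.finrank ℂ (Fin 3 → ℂ) := by
      simp [Module.finrank_fin_fun]
    let bb : Module.Basis (Fin 3) ℂ (Fin 3 → ℂ) := basisOfLinearIndependentOfCardEqFinrank hind hcard
    have hbb : ∀ j, bb j = ![u0, u1, v] j := fun j => by
      rw [coe_basisOfLinearIndependentOfCardEqFinrank]
    refine ⟨lam, hlam, basisUnit bb, ?_⟩
    have key : M = (basisUnit bb : Mat3) * (lam • Matrix.diagonal ![1, 1, -2]) *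
        (↑(basisUnit bb)⁻¹ : Mat3) := by
      apply conj_of_mul_eq
      ext i j
      rw [mul_basisUnit_apply]
      have hdiag : (lam • Matrix.diagonal ![1, 1, -2] : Mat3) =
          Matrix.diagonal ![lam, lam, -2 * lam] := by
        rw [← Matrix.diagonal_smul]
        congr 1
        funext i; fin_cases i <;> simp <;> ring
      rw [hdiag, Matrix.mul_diagonal]
      fin_cases j <;>
      simp only [Fin.zero_eta, Fin.mk_one, Fin.reduceFinMk, Fin.isValue]
      · have : M.mulVec (bb 0) = lam • u0 := by
          rw [hbb 0]; show M.mulVec u0 = lam • u0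
          rw [hMx u0, hwu0]; simp
        rw [this]
        simp [basisUnit_apply, hbb 0]
        ring
      · have : M.mulVec (bb 1) = lam • u1 := by
          rw [hbb 1]; show M.mulVec u1 = lam • u1
          rw [hMx u1, hwu1]; simp
        rw [this]
        simp [basisUnit_apply, hbb 1]
        ring
      · have : M.mulVec (bb 2) = (-2 * lam) • v := by
          rw [hbb 2]; show M.mulVec v = (-2 * lam) • v
          rw [hMx v, htrN]
          module
        rw [this]
        simp [basisUnit_apply, hbb 2]
        ring
    rw [key, mul_smul_comm, smul_mul_assoc]

lemma rank_smul_eq {X : Mat3} {c : ℂ} (hc : c ≠ 0) : (c • X).rank = X.rank := by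
  rw [Matrix.smul_eq_diagonal_mul]
  apply Matrix.rank_mul_eq_right_of_isUnit_det
  rw [Matrix.det_diagonal]
  simp [hc]

lemma isUnit_det_unit (P : (Mat3)ˣ) : IsUnit (P : Mat3).det := by
  exact (Matrix.isUnit_iff_isUnit_det _).mp P.isUnit

lemma isUnit_det_unit_inv (P : (Mat3)ˣ) : IsUnit (↑P⁻¹ : Mat3).det := by
  exact (Matrix.isUnit_iff_isUnit_det _).mp P⁻¹.isUnit

lemma rank_conj (P : (Mat3)ˣ) (Y : Mat3) :
    ((P : Mat3) * Y * (↑P⁻¹ : Mat3)).rank = Y.rank := by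
  rw [Matrix.rank_mul_eq_left_of_isUnit_det _ _ (isUnit_det_unit_inv P),
    Matrix.rank_mul_eq_right_of_isUnit_det _ _ (isUnit_det_unit P)]

lemma rank_one_of_classification (M : Mat3)
    (h : (∃ c : ℂ, c ≠ 0 ∧ ∃ P : (Mat3)ˣ,
        M = c • ((P : Mat3) * Matrix.diagonal ![1, 1, -2] * (↑P⁻¹ : Mat3))) ∨
      (∃ P : (Mat3)ˣ,
        M = (P : Mat3) * Matrix.single 0 1 1 * (↑P⁻¹ : Mat3))) :
    ∃ lam : ℂ, (M - lam • (1 : Mat3)).rank = 1 := by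
  rcases h with ⟨c, hc, P, hM⟩ | ⟨P, hM⟩
  · refine ⟨c, ?_⟩
    have hPP : (P : Mat3) * (↑P⁻¹ : Mat3) = 1 := by
      rw [← Units.val_mul, mul_inv_cancel, Units.val_one]
    have key : M - c • (1 : Mat3) =
        c • ((P : Mat3) * Matrix.diagonal ![0, 0, -3] * (↑P⁻¹ : Mat3)) := by
      have hD : (Matrix.diagonal ![0, 0, -3] : Mat3) =
          Matrix.diagonal ![1, 1, -2] - 1 := by
        ext i j
        fin_cases i <;> fin_cases j <;>
          simp [Matrix.diagonal_apply, Matrix.one_apply] <;> norm_num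
      rw [hD, hM]
      rw [Matrix.mul_sub, Matrix.mul_one, Matrix.sub_mul, smul_sub, hPP]
    rw [key, rank_smul_eq hc, rank_conj]
    rw [Matrix.rank_diagonal]
    rw [Fintype.card_eq_one_iff]
    refine ⟨⟨2, by simp⟩, ?_⟩
    rintro ⟨i, hi⟩
    apply Subtype.ext
    fin_cases i
    · exfalso; apply hi; norm_num
    · exfalso; apply hi; norm_num
    · rfl
  · refine ⟨0, ?_⟩
    rw [zero_smul, sub_zero, hM, rank_conj]
    have hE : (Matrix.single 0 1 1 : Mat3) =
        vecMulVec (Pi.single 0 1) (Pi.single 1 1) := by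
      ext i j
      rw [vecMulVec_apply]
      fin_cases i <;> fin_cases j <;>
        simp [Matrix.single, Pi.single_apply]
    rw [hE]
    apply rank_vecMulVec_eq_one
    · intro hcon
      have := congrFun hcon 0
      simp at this
    · intro hcon
      have := congrFun hcon 1
      simp at this

lemma factor_expand (M : Mat3) (x y : ℂ) :
    (M - x•1) * (M - y•1) = M*M - (x+y)•M + (x*y)•1 := by
  simp only [sub_mul, mul_sub, smul_mul_assoc, mul_smul_comm, smul_smul, add_smul,
    Matrix.mul_one, Matrix.one_mul]
  module

lemma factor_comm (M : Mat3) (x y : ℂ) :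
    (M - x•1) * (M - y•1) = (M - y•1) * (M - x•1) := by
  rw [factor_expand, factor_expand]
  ring_nf

lemma exists_eigvec (M : Mat3) {r : ℂ} (hdet : (M - r • (1:Mat3)).det = 0) :
    ∃ v : Fin 3 → ℂ, v ≠ 0 ∧ M.mulVec v = r • v := by
  obtain ⟨v, hv, hmv⟩ := Matrix.exists_mulVec_eq_zero_iff.mpr hdet
  refine ⟨v, hv, ?_⟩
  rw [Matrix.sub_mulVec, Matrix.smul_mulVec, Matrix.one_mulVec, sub_eq_zero] at hmv
  exact hmv

lemma ker_le_one_of_rank (N : Mat3) (h : 2 ≤ N.rank) :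
    Module.finrank ℂ (LinearMap.ker N.mulVecLin) ≤ 1 := by
  have := LinearMap.finrank_range_add_finrank_ker N.mulVecLin
  rw [Module.finrank_fin_fun] at this
  have hr : N.rank = Module.finrank ℂ (LinearMap.range N.mulVecLin) := rfl
  omega

lemma rank_ge_of_ker (N : Mat3) (h : Module.finrank ℂ (LinearMap.ker N.mulVecLin) ≤ 1) :
    2 ≤ Module.finrank ℂ (LinearMap.range N.mulVecLin) := by
  have := LinearMap.finrank_range_add_finrank_ker N.mulVecLin
  rw [Module.finrank_fin_fun] at this
  omega

lemma cyclic_of_triple (M : Mat3) (a : ℂ)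
    (hCH : (M - a•(1:Mat3)) * ((M - a•(1:Mat3)) * (M - a•(1:Mat3))) = 0)
    (hker : Module.finrank ℂ (LinearMap.ker (M - a•(1:Mat3)).mulVecLin) ≤ 1) :
    ∃ v : Fin 3 → ℂ, LinearIndependent ℂ ![v, M.mulVec v, M.mulVec (M.mulVec v)] := by
  set N : Mat3 := M - a•(1:Mat3) with hNdef
  have hNx : ∀ x : Fin 3 → ℂ, M.mulVec x = N.mulVec x + a • x := by
    intro x
    rw [hNdef, Matrix.sub_mulVec, Matrix.smul_mulVec, Matrix.one_mulVec]
    module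
  have hN2 : N * N ≠ 0 := by
    intro h0
    have hle : LinearMap.range N.mulVecLin ≤ LinearMap.ker N.mulVecLin := by
      rintro _ ⟨x, rfl⟩
      rw [LinearMap.mem_ker, Matrix.mulVecLin_apply, Matrix.mulVecLin_apply,
        Matrix.mulVec_mulVec, h0]
      simp
    have := Submodule.finrank_mono hle
    have h2 := rank_ge_of_ker N hker
    omega
  obtain ⟨v, hv⟩ : ∃ v : Fin 3 → ℂ, (N * N).mulVec v ≠ 0 := by
    by_contra hcon
    push_neg at hcon
    exact hN2 (mat3_eq_zero_of_mulVec_eq_zero hcon)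
  set n1 : Fin 3 → ℂ := N.mulVec v with hn1def
  set n2 : Fin 3 → ℂ := N.mulVec n1 with hn2def
  have hn2 : n2 ≠ 0 := by
    rw [hn2def, hn1def, Matrix.mulVec_mulVec]
    exact hv
  have hNNN : (N * N) * N = 0 := by
    rw [Matrix.mul_assoc]; exact hCH
  have hN3 : N.mulVec n2 = 0 := by
    rw [hn2def, hn1def, Matrix.mulVec_mulVec, Matrix.mulVec_mulVec, hNNN]
    simp
  have happ : ∀ d0 d1 d2 : ℂ, d0•v + d1•n1 + d2•n2 = 0 → d0•n1 + d1•n2 = 0 := by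
    intro d0 d1 d2 h
    have h' := congrArg N.mulVec h
    simp only [Matrix.mulVec_add, Matrix.mulVec_smul, Matrix.mulVec_zero, hN3,
      smul_zero, add_zero] at h'
    rw [← hn1def, ← hn2def] at h'
    linear_combination (norm := module) h'
  have hM1 : M.mulVec v = n1 + a • v := by rw [hNx v, hn1def]
  have hM2 : M.mulVec (M.mulVec v) = n2 + (2*a) • n1 + (a^2) • v := by
    rw [hM1, Matrix.mulVec_add, Matrix.mulVec_smul, hNx n1, hNx v, hn2def, hn1def]
    module
  refine ⟨v, ?_⟩
  rw [Fintype.linearIndependent_iff]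
  intro g hg
  rw [Fin.sum_univ_three] at hg
  simp only [Matrix.cons_val_zero, Matrix.cons_val_one, Matrix.head_cons,
    Matrix.cons_val_two, Matrix.tail_cons] at hg
  rw [hM2, hM1] at hg
  have key : (g 0 + a * g 1 + a^2 * g 2)•v + (g 1 + 2*a*g 2)•n1 + g 2•n2 = 0 := by
    linear_combination (norm := module) hg
  have key1 := happ _ _ _ key
  have key2 : (g 0 + a * g 1 + a^2 * g 2) • n2 = 0 := by
    have h' := congrArg N.mulVec key1
    simp only [Matrix.mulVec_add, Matrix.mulVec_smul, Matrix.mulVec_zero, hN3,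
      smul_zero, add_zero] at h'
    rw [← hn2def] at h'
    exact h'
  have hd0 : g 0 + a * g 1 + a^2 * g 2 = 0 := by
    rcases smul_eq_zero.mp key2 with h | h
    · exact h
    · exact absurd h hn2
  rw [hd0, zero_smul, zero_add] at key1
  have hd1 : g 1 + 2*a*g 2 = 0 := by
    rcases smul_eq_zero.mp key1 with h | h
    · exact h
    · exact absurd h hn2
  rw [hd0, hd1, zero_smul, zero_smul, zero_add, zero_add] at key
  have hg2 : g 2 = 0 := by
    rcases smul_eq_zero.mp key with h | h
    · exact h
    · exact absurd h hn2
  have hg1 : g 1 = 0 := by linear_combination hd1 - 2*a*hg2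
  have hg0 : g 0 = 0 := by linear_combination hd0 - a*hg1 - a^2*hg2
  intro i; fin_cases i <;> assumption

lemma cyclic_of_double (M : Mat3) (a c : ℂ) (hac : a ≠ c)
    (hCH : ((M - a•(1:Mat3)) * (M - a•(1:Mat3))) * (M - c•(1:Mat3)) = 0)
    (hdetc : (M - c•(1:Mat3)).det = 0)
    (hkera : Module.finrank ℂ (LinearMap.ker (M - a•(1:Mat3)).mulVecLin) ≤ 1)
    (hkerc : Module.finrank ℂ (LinearMap.ker (M - c•(1:Mat3)).mulVecLin) ≤ 1) :
    ∃ v : Fin 3 → ℂ, LinearIndependent ℂ ![v, M.mulVec v, M.mulVec (M.mulVec v)] := by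
  obtain ⟨u, hu0, hu⟩ := exists_eigvec M hdetc
  set N : Mat3 := M - a•(1:Mat3) with hNdef
  set C : Mat3 := M - c•(1:Mat3) with hCdef
  have hca : c - a ≠ 0 := sub_ne_zero.mpr (Ne.symm hac)
  have hNx : ∀ x : Fin 3 → ℂ, M.mulVec x = N.mulVec x + a • x := by
    intro x
    rw [hNdef, Matrix.sub_mulVec, Matrix.smul_mulVec, Matrix.one_mulVec]
    module
  have hNu : N.mulVec u = (c - a) • u := by
    rw [hNdef, Matrix.sub_mulVec, Matrix.smul_mulVec, Matrix.one_mulVec, hu]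
    module
  -- kernel of N² has dimension ≥ 2
  have hrange : LinearMap.range C.mulVecLin ≤ LinearMap.ker (N * N).mulVecLin := by
    rintro _ ⟨x, rfl⟩
    rw [LinearMap.mem_ker, Matrix.mulVecLin_apply, Matrix.mulVecLin_apply,
      Matrix.mulVec_mulVec, hCH]
    simp
  have hdim2 : 2 ≤ Module.finrank ℂ (LinearMap.ker (N * N).mulVecLin) :=
    le_trans (rank_ge_of_ker C hkerc) (Submodule.finrank_mono hrange)
  -- pick w in ker N² not in ker N
  obtain ⟨w, hwker, hwnot⟩ :
      ∃ w ∈ LinearMap.ker (N * N).mulVecLin, w ∉ LinearMap.ker N.mulVecLin := by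
    rw [← SetLike.not_le_iff_exists]
    intro hle
    have := Submodule.finrank_mono hle
    omega
  have hw2 : N.mulVec (N.mulVec w) = 0 := by
    rw [Matrix.mulVec_mulVec]
    exact hwker
  have hw1 : N.mulVec w ≠ 0 := hwnot
  set n1 : Fin 3 → ℂ := N.mulVec w with hn1def
  -- independence of w, n1, u
  have aux : ∀ α β γ : ℂ, α•w + β•n1 + γ•u = 0 → α = 0 ∧ β = 0 ∧ γ = 0 := by
    intro α β γ h
    have h1 : α•n1 + (γ*(c-a))•u = 0 := by
      have h' := congrArg N.mulVec h
      simp only [Matrix.mulVec_add, Matrix.mulVec_smul, Matrix.mulVec_zero, hNu] at h'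
      rw [← hn1def] at h'
      rw [show N.mulVec n1 = 0 from hw2] at h'
      linear_combination (norm := module) h'
    have h2 : (γ*(c-a)*(c-a))•u = 0 := by
      have h' := congrArg N.mulVec h1
      simp only [Matrix.mulVec_add, Matrix.mulVec_smul, Matrix.mulVec_zero, hNu] at h'
      rw [show N.mulVec n1 = 0 from hw2] at h'
      linear_combination (norm := module) h'
    have hγ : γ = 0 := by
      rcases smul_eq_zero.mp h2 with hh | hh
      · rcases mul_eq_zero.mp hh with hh2 | hh2
        · rcases mul_eq_zero.mp hh2 with hh3 | hh3
          · exact hh3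
          · exact absurd hh3 hca
        · exact absurd hh2 hca
      · exact absurd hh hu0
    rw [hγ, zero_mul, zero_smul, add_zero] at h1
    have hα : α = 0 := by
      rcases smul_eq_zero.mp h1 with hh | hh
      · exact hh
      · exact absurd hh hw1
    rw [hα, hγ, zero_smul, zero_smul, zero_add, add_zero] at h
    have hβ : β = 0 := by
      rcases smul_eq_zero.mp h with hh | hh
      · exact hh
      · exact absurd hh hw1
    exact ⟨hα, hβ, hγ⟩
  -- cyclic vector w + u
  refine ⟨w + u, ?_⟩
  have hM1 : M.mulVec (w + u) = n1 + a•w + c•u := by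
    rw [Matrix.mulVec_add, hNx w, hu, hn1def]
  have hM2 : M.mulVec (M.mulVec (w + u)) = (2*a)•n1 + (a^2)•w + (c^2)•u := by
    rw [hM1]
    simp only [Matrix.mulVec_add, Matrix.mulVec_smul, hu]
    rw [hNx n1, hNx w, show N.mulVec n1 = 0 from hw2, ← hn1def]
    module
  rw [Fintype.linearIndependent_iff]
  intro g hg
  rw [Fin.sum_univ_three] at hg
  simp only [Matrix.cons_val_zero, Matrix.cons_val_one, Matrix.head_cons,
    Matrix.cons_val_two, Matrix.tail_cons] at hg
  rw [hM2, hM1] at hg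
  have key : (g 0 + a*g 1 + a^2*g 2)•w + (g 1 + 2*a*g 2)•n1 + (g 0 + c*g 1 + c^2*g 2)•u = 0 := by
    linear_combination (norm := module) hg
  obtain ⟨hd0, hd1, he⟩ := aux _ _ _ key
  have hg2 : g 2 * (c-a)^2 = 0 := by linear_combination he - hd0 - (c-a)*hd1
  have hg2' : g 2 = 0 := by
    rcases mul_eq_zero.mp hg2 with h | h
    · exact h
    · exact absurd h (pow_ne_zero _ hca)
  have hg1 : g 1 = 0 := by linear_combination hd1 - 2*a*hg2'
  have hg0 : g 0 = 0 := by linear_combination hd0 - a*hg1 - a^2*hg2'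
  intro i; fin_cases i <;> assumption

lemma cyclic_of_distinct (M : Mat3) (a b c : ℂ) (hab : a ≠ b) (hac : a ≠ c) (hbc : b ≠ c)
    (hdeta : (M - a•(1:Mat3)).det = 0)
    (hdetb : (M - b•(1:Mat3)).det = 0)
    (hdetc : (M - c•(1:Mat3)).det = 0) :
    ∃ v : Fin 3 → ℂ, LinearIndependent ℂ ![v, M.mulVec v, M.mulVec (M.mulVec v)] := by
  obtain ⟨va, hva0, hva⟩ := exists_eigvec M hdeta
  obtain ⟨vb, hvb0, hvb⟩ := exists_eigvec M hdetb
  obtain ⟨vc, hvc0, hvc⟩ := exists_eigvec M hdetc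
  have aux : ∀ α β γ : ℂ, α•va + β•vb + γ•vc = 0 → α = 0 ∧ β = 0 ∧ γ = 0 := by
    intro α β γ h0
    have h1 : (α*a)•va + (β*b)•vb + (γ*c)•vc = 0 := by
      have h' := congrArg M.mulVec h0
      simp only [Matrix.mulVec_add, Matrix.mulVec_smul, Matrix.mulVec_zero,
        hva, hvb, hvc] at h'
      linear_combination (norm := module) h'
    have h2 : (α*a*a)•va + (β*b*b)•vb + (γ*c*c)•vc = 0 := by
      have h' := congrArg M.mulVec h1
      simp only [Matrix.mulVec_add, Matrix.mulVec_smul, Matrix.mulVec_zero,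
        hva, hvb, hvc] at h'
      linear_combination (norm := module) h'
    have hA : (α*(a-b)*(a-c))•va = 0 := by
      linear_combination (norm := module) h2 - (b+c)•h1 + (b*c)•h0
    have hB : (β*(b-a)*(b-c))•vb = 0 := by
      linear_combination (norm := module) h2 - (a+c)•h1 + (a*c)•h0
    have hC : (γ*(c-a)*(c-b))•vc = 0 := by
      linear_combination (norm := module) h2 - (a+b)•h1 + (a*b)•h0
    have solve : ∀ (x y z : ℂ) (v : Fin 3 → ℂ), v ≠ 0 → y ≠ 0 → z ≠ 0 →
        (x*y*z)•v = 0 → x = 0 := by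
      intro x y z v hv hy hz hxyz
      rcases smul_eq_zero.mp hxyz with hh | hh
      · rcases mul_eq_zero.mp hh with hh2 | hh2
        · rcases mul_eq_zero.mp hh2 with hh3 | hh3
          · exact hh3
          · exact absurd hh3 hy
        · exact absurd hh2 hz
      · exact absurd hh hv
    exact ⟨solve _ _ _ _ hva0 (sub_ne_zero.mpr hab) (sub_ne_zero.mpr hac) hA,
      solve _ _ _ _ hvb0 (sub_ne_zero.mpr (Ne.symm hab)) (sub_ne_zero.mpr hbc) hB,
      solve _ _ _ _ hvc0 (sub_ne_zero.mpr (Ne.symm hac)) (sub_ne_zero.mpr (Ne.symm hbc)) hC⟩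
  refine ⟨va + vb + vc, ?_⟩
  have hM1 : M.mulVec (va + vb + vc) = a•va + b•vb + c•vc := by
    simp only [Matrix.mulVec_add, hva, hvb, hvc]
  have hM2 : M.mulVec (M.mulVec (va + vb + vc)) = (a^2)•va + (b^2)•vb + (c^2)•vc := by
    rw [hM1]
    simp only [Matrix.mulVec_add, Matrix.mulVec_smul, hva, hvb, hvc]
    module
  rw [Fintype.linearIndependent_iff]
  intro g hg
  rw [Fin.sum_univ_three] at hg
  simp only [Matrix.cons_val_zero, Matrix.cons_val_one, Matrix.head_cons,
    Matrix.cons_val_two, Matrix.tail_cons] at hg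
  rw [hM2, hM1] at hg
  have key : (g 0 + a*g 1 + a^2*g 2)•va + (g 0 + b*g 1 + b^2*g 2)•vb +
      (g 0 + c*g 1 + c^2*g 2)•vc = 0 := by
    linear_combination (norm := module) hg
  obtain ⟨hEa, hEb, hEc⟩ := aux _ _ _ key
  have hg2 : g 2 * ((a-b)*(b-c)*(c-a)) = 0 := by
    linear_combination (-(b-c))*hEa + (-(c-a))*hEb + (-(a-b))*hEc
  have hg2' : g 2 = 0 := by
    rcases mul_eq_zero.mp hg2 with h | h
    · exact h
    · exfalso
      rcases mul_eq_zero.mp h with h2 | h2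
      · rcases mul_eq_zero.mp h2 with h3 | h3
        · exact sub_ne_zero.mpr hab h3
        · exact sub_ne_zero.mpr hbc h3
      · exact sub_ne_zero.mpr (Ne.symm hac) h2
  have hg1 : g 1 * (a-b) = 0 := by linear_combination hEa - hEb - (a^2-b^2)*hg2'
  have hg1' : g 1 = 0 := by
    rcases mul_eq_zero.mp hg1 with h | h
    · exact h
    · exact absurd h (sub_ne_zero.mpr hab)
  have hg0 : g 0 = 0 := by linear_combination hEa - a*hg1' - a^2*hg2'
  intro i; fin_cases i <;> assumption

lemma comm3 (M : Mat3) (x y : ℂ) :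
    (M - x•(1:Mat3)) * ((M - y•(1:Mat3)) * (M - y•(1:Mat3))) =
      ((M - y•(1:Mat3)) * (M - y•(1:Mat3))) * (M - x•(1:Mat3)) := by
  rw [← Matrix.mul_assoc, factor_comm M x y, Matrix.mul_assoc, factor_comm M x y,
    ← Matrix.mul_assoc]

lemma exists_cyclic_vec (M : Mat3)
    (hker : ∀ lam : ℂ, Module.finrank ℂ (LinearMap.ker (M - lam•(1:Mat3)).mulVecLin) ≤ 1) :
    ∃ v : Fin 3 → ℂ, LinearIndependent ℂ ![v, M.mulVec v, M.mulVec (M.mulVec v)] := by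
  have hmonic := M.charpoly_monic
  have hdeg : M.charpoly.natDegree = 3 := by
    rw [Matrix.charpoly_natDegree_eq_dim]; simp
  have hsplits : Splits M.charpoly := IsAlgClosed.splits _
  have hcard : Multiset.card M.charpoly.roots = 3 := by
    rw [Polynomial.splits_iff_card_roots.mp hsplits, hdeg]
  obtain ⟨a, b, c, habc⟩ := Multiset.card_eq_three.mp hcard
  have hfact : M.charpoly = (X - Polynomial.C a) * ((X - Polynomial.C b) * (X - Polynomial.C c)) := by
    have h := hsplits.eq_prod_roots_of_monic hmonic
    rw [habc] at h
    simpa using h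
  have hdet : ∀ r : ℂ, M.charpoly.eval r = 0 → (M - r•(1:Mat3)).det = 0 := by
    intro r heval
    rw [eval_charpoly'] at heval
    have hns : (M - r•(1:Mat3)) = -(r•(1:Mat3) - M) := (neg_sub _ _).symm
    rw [hns, Matrix.det_neg, heval, mul_zero]
  have hdeta : (M - a•(1:Mat3)).det = 0 := hdet a (by rw [hfact]; simp)
  have hdetb : (M - b•(1:Mat3)).det = 0 := hdet b (by rw [hfact]; simp)
  have hdetc : (M - c•(1:Mat3)).det = 0 := hdet c (by rw [hfact]; simp)
  have hCH : (M - a•(1:Mat3)) * ((M - b•(1:Mat3)) * (M - c•(1:Mat3))) = 0 := by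
    have h := Matrix.aeval_self_charpoly M
    rw [hfact] at h
    simpa [_root_.map_mul, map_sub, Polynomial.aeval_X, Polynomial.aeval_C,
      Algebra.algebraMap_eq_smul_one] using h
  by_cases hab : a = b
  · subst hab
    by_cases hac : a = c
    · subst hac
      exact cyclic_of_triple M a hCH (hker a)
    · refine cyclic_of_double M a c hac ?_ hdetc (hker a) (hker c)
      rw [← Matrix.mul_assoc] at hCH
      exact hCH
  · by_cases hac : a = c
    · subst hac
      refine cyclic_of_double M a b hab ?_ hdetb (hker a) (hker b)
      rw [factor_comm M b a, ← Matrix.mul_assoc] at hCH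
      exact hCH
    · by_cases hbc : b = c
      · subst hbc
        refine cyclic_of_double M b a (Ne.symm hab) ?_ hdeta (hker b) (hker a)
        rw [comm3 M a b] at hCH
        exact hCH
      · exact cyclic_of_distinct M a b c hab hac hbc hdeta hdetb hdetc

lemma finrank_le_three (M : Mat3)
    (h2 : ∀ lam : ℂ, 2 ≤ (M - lam•(1:Mat3)).rank) :
    Module.finrank ℂ (sl3Centralizer M) ≤ 3 := by
  obtain ⟨v, hind⟩ := exists_cyclic_vec M (fun lam => ker_le_one_of_rank _ (h2 lam))
  have hcard : Fintype.card (Fin 3) = Module.finrank ℂ (Fin 3 → ℂ) := by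
    simp [Module.finrank_fin_fun]
  let bb : Module.Basis (Fin 3) ℂ (Fin 3 → ℂ) := basisOfLinearIndependentOfCardEqFinrank hind hcard
  have hbb : ∀ j, bb j = ![v, M.mulVec v, M.mulVec (M.mulVec v)] j := fun j => by
    rw [coe_basisOfLinearIndependentOfCardEqFinrank]
  let L : sl3Centralizer M →ₗ[ℂ] (Fin 3 → ℂ) := {
    toFun := fun A => (A : Mat3).mulVec v
    map_add' := by rintro A B; simp [Matrix.add_mulVec]
    map_smul' := by rintro cst A; simp [Matrix.smul_mulVec] }
  have hinj : Function.Injective L := by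
    rw [injective_iff_map_eq_zero]
    intro A hA0
    have hA0' : (A : Mat3).mulVec v = 0 := hA0
    obtain ⟨htr, hcomm⟩ := mem_sl3Centralizer.mp A.2
    have h0 : ∀ j, (A : Mat3).mulVec (bb j) = 0 := by
      intro j
      rw [hbb j]
      fin_cases j
      · exact hA0'
      · show (A : Mat3).mulVec (M.mulVec v) = 0
        rw [Matrix.mulVec_mulVec, hcomm, ← Matrix.mulVec_mulVec, hA0',
          Matrix.mulVec_zero]
      · show (A : Mat3).mulVec (M.mulVec (M.mulVec v)) = 0
        have hAMM : ((A : Mat3) * M) * M = (M * M) * (A : Mat3) := by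
          rw [hcomm, Matrix.mul_assoc, hcomm, ← Matrix.mul_assoc]
        rw [Matrix.mulVec_mulVec, Matrix.mulVec_mulVec, hAMM, ← Matrix.mulVec_mulVec,
          hA0', Matrix.mulVec_zero]
    have hAz : (A : Mat3) = 0 := by
      apply mat3_eq_zero_of_mulVec_eq_zero
      intro x
      have hx := Module.Basis.sum_repr bb x
      rw [← Matrix.mulVecLin_apply, ← hx, map_sum]
      simp [h0]
    exact Subtype.ext hAz
  have := LinearMap.finrank_le_finrank_of_injective hinj
  rwa [Module.finrank_fin_fun] at this

lemma mat3_rank_zero (N : Mat3) (h : N.rank = 0) : N = 0 := by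
  have h' : Module.finrank ℂ (LinearMap.range N.mulVecLin) = 0 := h
  have h0 : LinearMap.range N.mulVecLin = ⊥ := Submodule.finrank_eq_zero.mp h'
  apply mat3_eq_zero_of_mulVec_eq_zero
  intro x
  have hm := LinearMap.mem_range_self N.mulVecLin x
  rw [h0] at hm
  simpa using hm

lemma finrank_eq_four_of_classification (M : Mat3)
    (h : (∃ c : ℂ, c ≠ 0 ∧ ∃ P : (Mat3)ˣ,
        M = c • ((P : Mat3) * Matrix.diagonal ![1, 1, -2] * (↑P⁻¹ : Mat3))) ∨
      (∃ P : (Mat3)ˣ,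
        M = (P : Mat3) * Matrix.single 0 1 1 * (↑P⁻¹ : Mat3))) :
    Module.finrank ℂ (sl3Centralizer M) = 4 := by
  rcases h with ⟨c, hc, P, hM⟩ | ⟨P, hM⟩
  · rw [hM, sl3Centralizer_smul _ hc, finrank_sl3Centralizer_conj, finrank_centralizer_diag]
  · rw [hM, finrank_sl3Centralizer_conj, finrank_centralizer_nil]

/-- For nonzero traceless `M`, the centralizer of `M` in `sl₃(ℂ)` is 4-dimensional
iff `M − λ·Id` has rank 1 for some `λ`, iff `M` is similar to `diag(1,1,−2)` up to a
nonzero scalar or similar to the elementary nilpotent matrix `E₁₂`. -/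
theorem sl3_centralizer_dim_four_iff (M : Matrix (Fin 3) (Fin 3) ℂ)
    (hM : M ≠ 0) (htr : Matrix.trace M = 0) :
    (Module.finrank ℂ (sl3Centralizer M) = 4 ↔
      ∃ lam : ℂ, (M - lam • (1 : Matrix (Fin 3) (Fin 3) ℂ)).rank = 1) ∧
    (Module.finrank ℂ (sl3Centralizer M) = 4 ↔
      (∃ c : ℂ, c ≠ 0 ∧ ∃ P : (Matrix (Fin 3) (Fin 3) ℂ)ˣ,
          M = c • ((P : Matrix (Fin 3) (Fin 3) ℂ) * Matrix.diagonal ![1, 1, -2] * (↑P⁻¹ : Matrix (Fin 3) (Fin 3) ℂ))) ∨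
      (∃ P : (Matrix (Fin 3) (Fin 3) ℂ)ˣ,
          M = (P : Matrix (Fin 3) (Fin 3) ℂ) * Matrix.single 0 1 1 * (↑P⁻¹ : Matrix (Fin 3) (Fin 3) ℂ))) := by
  have hBC : (∃ lam : ℂ, (M - lam • (1 : Matrix (Fin 3) (Fin 3) ℂ)).rank = 1) →
      ((∃ c : ℂ, c ≠ 0 ∧ ∃ P : (Matrix (Fin 3) (Fin 3) ℂ)ˣ,
          M = c • ((P : Matrix (Fin 3) (Fin 3) ℂ) * Matrix.diagonal ![1, 1, -2] * (↑P⁻¹ : Matrix (Fin 3) (Fin 3) ℂ))) ∨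
      (∃ P : (Matrix (Fin 3) (Fin 3) ℂ)ˣ,
          M = (P : Matrix (Fin 3) (Fin 3) ℂ) * Matrix.single 0 1 1 * (↑P⁻¹ : Matrix (Fin 3) (Fin 3) ℂ))) := by
    rintro ⟨lam, hr⟩
    exact classification_of_rank_one M htr lam (exists_vecMulVec_of_rank_one hr)
  have hCB := rank_one_of_classification M
  have hCA := finrank_eq_four_of_classification M
  have hAB : Module.finrank ℂ (sl3Centralizer M) = 4 →
      ∃ lam : ℂ, (M - lam • (1 : Matrix (Fin 3) (Fin 3) ℂ)).rank = 1 := by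
    intro h4
    by_contra hno
    push_neg at hno
    have h2 : ∀ lam : ℂ, 2 ≤ (M - lam • (1 : Mat3)).rank := by
      intro lam
      have hne1 := hno lam
      have hne0 : (M - lam • (1 : Mat3)).rank ≠ 0 := by
        intro h0
        have hz := mat3_rank_zero _ h0
        have hMl : M = lam • (1 : Mat3) := by rwa [sub_eq_zero] at hz
        rw [hMl, Matrix.trace_smul, Matrix.trace_one] at htr
        have hl : lam = 0 := by simpa using htr
        exact hM (by rw [hMl, hl, zero_smul])
      omega
    have := finrank_le_three M h2
    omega
  exact ⟨⟨hAB, fun hB => hCA (hBC hB)⟩, ⟨fun h4 => hBC (hAB h4), hCA⟩⟩
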